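/- Let v : ℝ²∖{0} → ℂ satisfy Kv = v and Σ₂^c v = v (pointwise), and set w = v + e^{iπ/4} R_{π/2} v. Then: (i) Kw = w; (ii) Σ₄^c w = w, where Σ₄^c = e^{iπ/4} R_{π/2} Σ₂^c, i.e. (Σ₄^c u)(x,y) = e^{iπ/4} conj(u(y,x)); and (iii) w vanishes on the half-diagonal of angle −3π/4: w(−t,−t) = 0 for every t > 0. -/

import Mathlib

open Real

noncomputable section

/-- The antilinear operator `K`: `(Ku)(x,y) = ((x+iy)/|x+iy|) · conj(u(x,y))`,
i.e. `Ku = e^{iθ} ū` in polar coordinates. -/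
def Kop (u : ℝ × ℝ → ℂ) : ℝ × ℝ → ℂ :=
  fun p => ((p.1 + p.2 * Complex.I) / ((‖(p.1 + p.2 * Complex.I : ℂ)‖ : ℝ) : ℂ))
    * (starRingEnd ℂ) (u p)

/-- The antilinear symmetry `Σ₂^c = ΓΣ₂`: `(Σ₂^c u)(x,y) = conj(u(x,−y))`. -/
def Sigma2c (u : ℝ × ℝ → ℂ) : ℝ × ℝ → ℂ :=
  fun p => (starRingEnd ℂ) (u (p.1, -p.2))

/-- The quantized rotation by `π/2`: `(R_{π/2}u)(x,y) = u(y,−x)`. -/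
def RotHalfPi (u : ℝ × ℝ → ℂ) : ℝ × ℝ → ℂ :=
  fun p => u (p.2, -p.1)

/-- The antilinear symmetry `Σ₄^c = e^{iπ/4}R_{π/2}Σ₂^c`:
`(Σ₄^c u)(x,y) = e^{iπ/4}·conj(u(y,x))`. -/
def Sigma4c (u : ℝ × ℝ → ℂ) : ℝ × ℝ → ℂ :=
  fun p => Complex.exp (π / 4 * Complex.I) * (starRingEnd ℂ) (u (p.2, p.1))

/-! Write `ω = e^{iπ/4}`, so `ω² = i` and `|ω| = 1`. Rotating a point by `-π/2` multiplies its
phase `e^{iθ}` by `-i`, whence `K R = i R K` and `K (u + ω R u) = K u + ω R K u`; together with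
`R Σ₂^c R = Σ₂^c` this gives `Σ₄^c (u + ω R u) = Σ₂^c u + ω R Σ₂^c u`. On the ray `θ = -3π/4` the
phase is `-ω`, and `K v = v`, `Σ₂^c v = v` there give `v(-t,-t) = -ω v(-t,t)`. -/

open Complex ComplexConjugate

local notation "ω" => Complex.exp (π / 4 * I)

lemma norm_exp_pi_div_four_mul_I : ‖ω‖ = 1 := by
  rw [← ofReal_ofNat, ← ofReal_div, norm_exp_ofReal_mul_I]

lemma exp_pi_div_four_mul_I_mul_conj : ω * conj ω = 1 := by
  rw [mul_conj, normSq_eq_norm_sq, norm_exp_pi_div_four_mul_I]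
  norm_num

lemma exp_pi_div_four_mul_I_mul_self : ω * ω = I := by
  rw [← Complex.exp_add]
  convert exp_pi_div_two_mul_I using 2
  ring

lemma I_mul_conj_exp_pi_div_four_mul_I : I * conj ω = ω := by
  calc I * conj ω = ω * (ω * conj ω) := by rw [← mul_assoc, exp_pi_div_four_mul_I_mul_self]
    _ = ω := by rw [exp_pi_div_four_mul_I_mul_conj, mul_one]

def polarPhase (p : ℝ × ℝ) : ℂ :=
  (p.1 + p.2 * I) / ((‖(p.1 + p.2 * I : ℂ)‖ : ℝ) : ℂ)

lemma Kop_apply (u : ℝ × ℝ → ℂ) (p : ℝ × ℝ) : Kop u p = polarPhase p * conj (u p) := rfl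

lemma polarPhase_rot (p : ℝ × ℝ) : polarPhase (p.2, -p.1) = -I * polarPhase p := by
  have hrot : ((p.2 : ℂ) + ((-p.1 : ℝ) : ℂ) * I) = -I * (p.1 + p.2 * I) := by
    push_cast
    linear_combination (p.2 : ℂ) * I_sq
  simp only [polarPhase, hrot, norm_mul, norm_neg, norm_I, one_mul]
  ring

lemma polarPhase_neg_diag {t : ℝ} (ht : 0 < t) : polarPhase (-t, -t) = -ω := by
  have hω : ω = ((√2 / 2 : ℝ) : ℂ) * (1 + I) := by
    rw [← ofReal_ofNat, ← ofReal_div, exp_mul_I, ← ofReal_cos, ← ofReal_sin,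
      cos_pi_div_four, sin_pi_div_four]
    ring
  have hz : ((-t : ℝ) : ℂ) + ((-t : ℝ) : ℂ) * I = -((t * √2 : ℝ) : ℂ) * ω := by
    rw [hω]
    have h2 : (√2 : ℂ) * √2 = 2 := by exact_mod_cast Real.mul_self_sqrt zero_le_two
    push_cast
    linear_combination ((t : ℂ) / 2 * (1 + I)) * h2
  have hr : 0 < t * √2 := by positivity
  rw [polarPhase, hz, norm_mul, norm_neg, norm_real, norm_exp_pi_div_four_mul_I, mul_one,
    Real.norm_of_nonneg hr.le, neg_mul, neg_div, mul_div_cancel_left₀ _ (ofReal_ne_zero.2 hr.ne')]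

lemma Kop_add_mul_rotHalfPi (u : ℝ × ℝ → ℂ) (p : ℝ × ℝ) :
    Kop (fun q => u q + ω * RotHalfPi u q) p = Kop u p + ω * RotHalfPi (Kop u) p := by
  simp only [Kop_apply, RotHalfPi, polarPhase_rot, map_add, map_mul]
  linear_combination (-I * polarPhase p * conj (u (p.2, -p.1))) * I_mul_conj_exp_pi_div_four_mul_I
    + polarPhase p * conj (u (p.2, -p.1)) * conj ω * I_sq

lemma Sigma4c_add_mul_rotHalfPi (u : ℝ × ℝ → ℂ) (p : ℝ × ℝ) :
    Sigma4c (fun q => u q + ω * RotHalfPi u q) p = Sigma2c u p + ω * RotHalfPi (Sigma2c u) p := by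
  simp only [Sigma4c, Sigma2c, RotHalfPi, map_add, map_mul, neg_neg]
  linear_combination conj (u (p.1, -p.2)) * exp_pi_div_four_mul_I_mul_conj

lemma rot_ne_zero {p : ℝ × ℝ} (hp : p ≠ 0) : ((p.2, -p.1) : ℝ × ℝ) ≠ 0 := by
  contrapose! hp
  simp_all [Prod.ext_iff]

/-- Let `v` satisfy `Kv = v` and `Σ₂^c v = v` on `ℝ²∖{0}`, and set
`w = v + e^{iπ/4}R_{π/2}v`. Then: (i) `Kw = w` off the origin; (ii) `Σ₄^c w = w`,
where `(Σ₄^c u)(x,y) = e^{iπ/4}·conj(u(y,x))`; and (iii) `w` vanishes on the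
half-diagonal of angle `−3π/4`: `w(−t,−t) = 0` for every `t > 0`. -/
theorem diag_symmetric_eigenfunction (v : ℝ × ℝ → ℂ)
    (hKv : ∀ p : ℝ × ℝ, p ≠ 0 → Kop v p = v p)
    (hSv : ∀ p : ℝ × ℝ, p ≠ 0 → Sigma2c v p = v p)
    (w : ℝ × ℝ → ℂ)
    (hw : ∀ p : ℝ × ℝ, w p = v p + Complex.exp (π / 4 * Complex.I) * RotHalfPi v p) :
    (∀ p : ℝ × ℝ, p ≠ 0 → Kop w p = w p)
    ∧ (∀ p : ℝ × ℝ, p ≠ 0 → Sigma4c w p = w p)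
    ∧ (∀ t : ℝ, 0 < t → w (-t, -t) = 0) := by
  obtain rfl : w = fun q => v q + ω * RotHalfPi v q := funext hw
  refine ⟨fun p hp => ?_, fun p hp => ?_, fun t ht => ?_⟩
  · rw [Kop_add_mul_rotHalfPi, RotHalfPi, hKv p hp, hKv _ (rot_ne_zero hp)]
    rfl
  · rw [Sigma4c_add_mul_rotHalfPi, RotHalfPi, hSv p hp, hSv _ (rot_ne_zero hp)]
    rfl
  · have hK := hKv (-t, -t) (by simp [ht.ne'])
    have hS := hSv (-t, t) (by simp [ht.ne'])
    rw [Kop_apply, polarPhase_neg_diag ht] at hK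
    simp only [Sigma2c] at hS
    simp only [RotHalfPi, neg_neg]
    rw [← hK, hS]
    ring

end
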